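/- Let U ⊆ ℝ⁵ be open and let (σ, θ₀, θ₁, θ₂, θ₃; W₀, W₁, W₂, H, G₀, G₁, G₂, G₃, I₀, T₁, T₆, T₇) be a canonical coframe on U with W₂ identically zero. Then the 1-form σ̃ = σ + 3·W₁·θ₀ satisfies: there exist smooth 1-forms λ₁, λ₂, λ₃, λ₄ on U with dσ̃ = σ∧λ₁ + θ₀∧λ₂ + θ₁∧λ₃ + θ₂∧λ₄; that is, dσ̃ lies in the algebraic ideal generated by σ, θ₀, θ₁, θ₂, so σ̃ is well defined on the quotient of U by the integral curves of the system {σ, θ₀, θ₁, θ₂}. -/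

import Mathlib

noncomputable section

/-- The exterior derivative of a smooth 1-form `η`, as a scalar-valued 2-form:
`dη(x)(u,v) = (fderiv ℝ η x u)(v) − (fderiv ℝ η x v)(u)`. -/
def d1 {E : Type*} [NormedAddCommGroup E] [NormedSpace ℝ E]
    (η : E → (E →L[ℝ] ℝ)) (x u v : E) : ℝ :=
  fderiv ℝ η x u v - fderiv ℝ η x v u

/-- The wedge product of two 1-forms, as a scalar-valued 2-form. -/
def wedge {E : Type*} [NormedAddCommGroup E] [NormedSpace ℝ E]
    (η ζ : E → (E →L[ℝ] ℝ)) (x u v : E) : ℝ :=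
  η x u * ζ x v - η x v * ζ x u

/-- For a canonical coframe with `W₂ ≡ 0`, the 1-form `σ̃ = σ + 3W₁θ₀` has exterior
derivative in the algebraic ideal generated by `σ, θ₀, θ₁, θ₂`, so it is well defined
on the quotient by the integral curves of `{σ, θ₀, θ₁, θ₂}`. -/
theorem sigma_tilde_descends
    (U : Set (Fin 5 → ℝ)) (hU : IsOpen U)
    (σ θ0 θ1 θ2 θ3 α β γ : (Fin 5 → ℝ) → ((Fin 5 → ℝ) →L[ℝ] ℝ))
    (W0 W1 W2 H G0 G1 G2 G3 I0 T1 T6 T7 : (Fin 5 → ℝ) → ℝ)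
    (hσ : ContDiffOn ℝ (⊤ : ℕ∞) σ U) (hθ0 : ContDiffOn ℝ (⊤ : ℕ∞) θ0 U)
    (hθ1 : ContDiffOn ℝ (⊤ : ℕ∞) θ1 U) (hθ2 : ContDiffOn ℝ (⊤ : ℕ∞) θ2 U)
    (hθ3 : ContDiffOn ℝ (⊤ : ℕ∞) θ3 U)
    (hW0 : ContDiffOn ℝ (⊤ : ℕ∞) W0 U) (hW1 : ContDiffOn ℝ (⊤ : ℕ∞) W1 U)
    (hW2 : ContDiffOn ℝ (⊤ : ℕ∞) W2 U) (hH : ContDiffOn ℝ (⊤ : ℕ∞) H U)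
    (hG0 : ContDiffOn ℝ (⊤ : ℕ∞) G0 U) (hG1 : ContDiffOn ℝ (⊤ : ℕ∞) G1 U)
    (hG2 : ContDiffOn ℝ (⊤ : ℕ∞) G2 U) (hG3 : ContDiffOn ℝ (⊤ : ℕ∞) G3 U)
    (hI0 : ContDiffOn ℝ (⊤ : ℕ∞) I0 U) (hT1 : ContDiffOn ℝ (⊤ : ℕ∞) T1 U)
    (hT6 : ContDiffOn ℝ (⊤ : ℕ∞) T6 U) (hT7 : ContDiffOn ℝ (⊤ : ℕ∞) T7 U)
    (hcoframe : ∀ x ∈ U, LinearIndependent ℝ ![σ x, θ0 x, θ1 x, θ2 x, θ3 x])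
    (hα : ∀ x ∈ U, α x = (-2 : ℝ) • (W0 x • θ0 x + W1 x • θ1 x + W2 x • θ2 x))
    (hβ : ∀ x ∈ U, β x = (2 : ℝ) • α x + (W0 x • θ0 x + W1 x • θ1 x + W2 x • θ2 x))
    (hγ : ∀ x ∈ U, γ x =
      H x • σ x - (3 : ℝ) • (G0 x • θ0 x + G1 x • θ1 x + G2 x • θ2 x + G3 x • θ3 x))
    (hdσ : ∀ x ∈ U, ∀ u v, d1 σ x u v =
      wedge α σ x u v
      + wedge θ0 (fun y => T1 y • θ1 y + (3 / 5 : ℝ) • θ3 y) x u v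
      - wedge θ1 θ2 x u v)
    (hdθ0 : ∀ x ∈ U, ∀ u v, d1 θ0 x u v =
      wedge (fun y => (2 : ℝ) • α y) θ0 x u v + wedge σ θ1 x u v)
    (hdθ1 : ∀ x ∈ U, ∀ u v, d1 θ1 x u v =
      wedge (fun y => β y - α y) θ1 x u v + wedge γ θ0 x u v + wedge σ θ2 x u v)
    (hdθ2 : ∀ x ∈ U, ∀ u v, d1 θ2 x u v =
      wedge (fun y => β y - (2 : ℝ) • α y) θ2 x u v
      + (4 / 3) * wedge γ θ1 x u v + wedge σ θ3 x u v)
    (hdθ3 : ∀ x ∈ U, ∀ u v, d1 θ3 x u v =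
      wedge (fun y => β y - (3 : ℝ) • α y) θ3 x u v + wedge γ θ2 x u v
      + I0 x * wedge σ θ0 x u v + T6 x * wedge θ0 θ1 x u v + T7 x * wedge θ0 θ2 x u v)
    (hW2zero : ∀ x ∈ U, W2 x = 0) :
    ∃ lam1 lam2 lam3 lam4 : (Fin 5 → ℝ) → ((Fin 5 → ℝ) →L[ℝ] ℝ),
      ContDiffOn ℝ (⊤ : ℕ∞) lam1 U ∧ ContDiffOn ℝ (⊤ : ℕ∞) lam2 U ∧
      ContDiffOn ℝ (⊤ : ℕ∞) lam3 U ∧ ContDiffOn ℝ (⊤ : ℕ∞) lam4 U ∧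
      ∀ x ∈ U, ∀ u v : Fin 5 → ℝ,
        d1 (fun y => σ y + (3 * W1 y) • θ0 y) x u v =
          wedge σ lam1 x u v + wedge θ0 lam2 x u v
          + wedge θ1 lam3 x u v + wedge θ2 lam4 x u v := by
    classical
  refine ⟨fun y => -α y + (3 * W1 y) • θ1 y,
    fun y => T1 y • θ1 y + (3 / 5 : ℝ) • θ3 y - (3 : ℝ) • (fderiv ℝ W1 y)
      - (6 * W1 y) • α y,
    fun y => -θ2 y, fun _ => 0, ?_, ?_, ?_, ?_, ?_⟩
  · have hαs : ContDiffOn ℝ (⊤ : ℕ∞) α U := by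
      apply ContDiffOn.congr ?_ hα
      exact ContDiffOn.const_smul _ (((hW0.smul hθ0).add (hW1.smul hθ1)).add (hW2.smul hθ2))
    exact (hαs.neg).add (((contDiffOn_const.mul hW1)).smul hθ1)
  · have hdW1 : ContDiffOn ℝ (⊤ : ℕ∞) (fun y => fderiv ℝ W1 y) U :=
      hW1.fderiv_of_isOpen hU (by exact_mod_cast le_top)
    have hαs : ContDiffOn ℝ (⊤ : ℕ∞) α U := by
      apply ContDiffOn.congr ?_ hα
      exact ContDiffOn.const_smul _ (((hW0.smul hθ0).add (hW1.smul hθ1)).add (hW2.smul hθ2))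
    exact ((((hT1.smul hθ1).add (hθ3.const_smul _)).sub (hdW1.const_smul _)).sub
      ((contDiffOn_const.mul hW1).smul hαs))
  · exact hθ2.neg
  · exact contDiffOn_const
  · intro x hx u v
    have hxU : U ∈ nhds x := hU.mem_nhds hx
    have hσx : DifferentiableAt ℝ σ x := (hσ.contDiffAt hxU).differentiableAt (by simp)
    have hθ0x : DifferentiableAt ℝ θ0 x := (hθ0.contDiffAt hxU).differentiableAt (by simp)
    have hW1x : DifferentiableAt ℝ W1 x := (hW1.contDiffAt hxU).differentiableAt (by simp)
    have hcx : DifferentiableAt ℝ (fun y => 3 * W1 y) x := hW1x.const_mul 3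
    have hF : fderiv ℝ (fun y => σ y + (3 * W1 y) • θ0 y) x
        = fderiv ℝ σ x + ((3 * W1 x) • fderiv ℝ θ0 x
          + (fderiv ℝ (fun y => 3 * W1 y) x).smulRight (θ0 x)) := by
      rw [fderiv_fun_add hσx (show DifferentiableAt ℝ (fun y => (3 * W1 y) • θ0 y) x from hcx.smul hθ0x),
        fderiv_fun_smul hcx hθ0x]
    have hc' : ∀ w, fderiv ℝ (fun y => 3 * W1 y) x w = 3 * fderiv ℝ W1 x w := by
      intro w
      rw [fderiv_const_mul hW1x]
      simp
    have key : d1 (fun y => σ y + (3 * W1 y) • θ0 y) x u v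
        = d1 σ x u v + (3 * W1 x) * d1 θ0 x u v
          + (3 * fderiv ℝ W1 x u * θ0 x v - 3 * fderiv ℝ W1 x v * θ0 x u) := by
      simp only [d1, hF, ContinuousLinearMap.add_apply, ContinuousLinearMap.smul_apply,
        ContinuousLinearMap.smulRight_apply, hc', smul_eq_mul]
      ring
    rw [key, hdσ x hx u v, hdθ0 x hx u v]
    simp only [wedge, ContinuousLinearMap.add_apply, ContinuousLinearMap.sub_apply,
      ContinuousLinearMap.neg_apply, ContinuousLinearMap.smul_apply,
      ContinuousLinearMap.zero_apply, smul_eq_mul]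
    ring
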